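/- arXiv:1610.01168 — 7 statements merged into one kernel-verified Lean document; each statement's English description precedes it below -/
import Mathlib

section
/- Let p_0, …, p_n ∈ ℝ^m be the vertices of a (θ,h)-full Euclidean n-simplex, and let G be the n×n Gram matrix with entries G_{ij} = ⟨p_i − p_0, p_j − p_0⟩ for 1 ≤ i, j ≤ n. Then every eigenvalue λ_k of G satisfies θ h n^{1−n} ≤ √(λ_k) ≤ h n. -/
open scoped RealInnerProductSpace

/-!
`G` is the Gram matrix of the edge vectors `p i - p 0`, so it is positive semidefinite with
trace `∑ ‖p i - p 0‖² ≤ n h²`; in particular every eigenvalue lies in `[0, n h²]`, which gives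
the upper bound. Writing `det G` as the product of the eigenvalues and bounding all factors but
the one equal to `μ` by `n h²` gives `θ² h^(2n) ≤ det G ≤ μ (n h²)^(n-1)`, i.e.
`μ ≥ θ² h² / n^(n-1) ≥ (θ h / n^(n-1))²`.
-/

theorem Finset.prod_le_mul_pow_card_sub_one {ι R : Type*} [CommSemiring R] [PartialOrder R]
    [IsOrderedRing R] [DecidableEq ι] {s : Finset ι} {f : ι → R} {c : R}
    (hf0 : ∀ i ∈ s, 0 ≤ f i) (hfc : ∀ i ∈ s, f i ≤ c) {k : ι} (hk : k ∈ s) :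
    ∏ i ∈ s, f i ≤ f k * c ^ (s.card - 1) := by
  rw [← mul_prod_erase s f hk, ← card_erase_of_mem hk]
  refine mul_le_mul_of_nonneg_left ((prod_le_prod ?_ ?_).trans_eq (prod_const c)) (hf0 k hk)
  · exact fun i hi => hf0 i (mem_of_mem_erase hi)
  · exact fun i hi => hfc i (mem_of_mem_erase hi)

open scoped ComplexOrder

namespace Matrix

variable {𝕜 n : Type*} [RCLike 𝕜] [Fintype n] [DecidableEq n]

theorem IsHermitian.exists_eigenvalues_eq_of_mulVec_eq_smul {A : Matrix n n 𝕜}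
    (hA : A.IsHermitian) {μ : ℝ} {x : n → 𝕜} (hx : x ≠ 0) (hAx : A *ᵥ x = (μ : 𝕜) • x) :
    ∃ k, hA.eigenvalues k = μ := by
  have hμ : Module.End.HasEigenvalue A.toLin' (μ : 𝕜) :=
    Module.End.hasEigenvalue_of_hasEigenvector ⟨Module.End.mem_eigenspace_iff.mpr hAx, hx⟩
  have := hμ.mem_spectrum
  rw [spectrum_toLin', hA.spectrum_eq_image_range] at this
  obtain ⟨_, ⟨k, rfl⟩, hk⟩ := this
  exact ⟨k, RCLike.ofReal_injective hk⟩

theorem PosSemidef.eigenvalues_le_re_trace {A : Matrix n n 𝕜} (hA : A.PosSemidef) (k : n) :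
    hA.isHermitian.eigenvalues k ≤ RCLike.re A.trace := by
  rw [hA.isHermitian.trace_eq_sum_eigenvalues, map_sum]
  simp only [RCLike.ofReal_re]
  exact Finset.single_le_sum (fun i _ => hA.eigenvalues_nonneg i) (Finset.mem_univ k)

omit [DecidableEq n] in
theorem trace_gram_real {E : Type*} [NormedAddCommGroup E] [InnerProductSpace ℝ E] (v : n → E) :
    (gram ℝ v).trace = ∑ i, ‖v i‖ ^ 2 := by
  simp [trace, gram_apply]

omit [DecidableEq n] in
theorem trace_gram_le {E : Type*} [NormedAddCommGroup E] [InnerProductSpace ℝ E] {v : n → E}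
    {c : ℝ} (hv : ∀ i, ‖v i‖ ≤ c) : (gram ℝ v).trace ≤ Fintype.card n * c ^ 2 := by
  rw [trace_gram_real, ← nsmul_eq_mul, ← Finset.card_univ]
  exact Finset.sum_le_card_nsmul _ _ _ fun i _ => pow_le_pow_left₀ (norm_nonneg _) (hv i) 2

end Matrix

theorem sq_div_pow_pred_le_of_sq_mul_pow_le {n : ℕ} (hn : 1 ≤ n) {θ h μ : ℝ} (hh : 0 < h)
    (hμ : θ ^ 2 * h ^ (2 * n) ≤ μ * (n * h ^ 2) ^ (n - 1)) :
    (θ * h / (n : ℝ) ^ (n - 1)) ^ 2 ≤ μ := by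
  have hN : (1 : ℝ) ≤ (n : ℝ) ^ (n - 1) := one_le_pow₀ (by exact_mod_cast hn)
  have hpow : h ^ (2 * n) = h ^ 2 * (h ^ 2) ^ (n - 1) := by
    rw [← pow_succ', ← pow_mul]; congr 1; omega
  have hscaled : θ ^ 2 * h ^ 2 ≤ μ * (n : ℝ) ^ (n - 1) := by
    rw [hpow, mul_pow] at hμ
    refine le_of_mul_le_mul_right ?_ (pow_pos (pow_pos hh 2) (n - 1))
    linarith
  rw [div_pow, div_le_iff₀ (by positivity)]
  nlinarith [sq_nonneg (θ * h)]

theorem eigenvalue_bounds_of_full_simplex_general (n m : ℕ) (θ h : ℝ)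
    (hh : 0 < h)
    (p : Fin (n + 1) → EuclideanSpace ℝ (Fin m))
    (G : Matrix (Fin n) (Fin n) ℝ)
    (hG : ∀ i j, G i j = ⟪p i.succ - p 0, p j.succ - p 0⟫)
    (hedge : ∀ i j, ‖p i - p j‖ ≤ h)
    (hfull : θ ^ 2 * h ^ (2 * n) ≤ G.det)
    (μ : ℝ) (x : Fin n → ℝ) (hx : x ≠ 0) (heig : G.mulVec x = μ • x) :
    θ * h / (n : ℝ) ^ (n - 1) ≤ Real.sqrt μ ∧ Real.sqrt μ ≤ h * n := by
  have hn : 1 ≤ n := Nat.one_le_iff_ne_zero.mpr <| by rintro rfl; exact hx (Subsingleton.elim _ _)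
  set v : Fin n → EuclideanSpace ℝ (Fin m) := fun i => p i.succ - p 0
  obtain rfl : G = Matrix.gram ℝ v := Matrix.ext hG
  have hpsd := Matrix.posSemidef_gram ℝ v
  obtain ⟨k, rfl⟩ := hpsd.isHermitian.exists_eigenvalues_eq_of_mulVec_eq_smul hx heig
  have htr : (Matrix.gram ℝ v).trace ≤ n * h ^ 2 := by
    simpa only [Fintype.card_fin] using Matrix.trace_gram_le (v := v) fun j => hedge j.succ 0
  have heig_le : ∀ i, hpsd.isHermitian.eigenvalues i ≤ n * h ^ 2 := fun i =>
    (hpsd.eigenvalues_le_re_trace i).trans htr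
  constructor
  · refine Real.le_sqrt_of_sq_le (sq_div_pow_pred_le_of_sq_mul_pow_le hn hh (hfull.trans ?_))
    simp only [hpsd.isHermitian.det_eq_prod_eigenvalues, RCLike.ofReal_real_eq_id, id]
    simpa only [Finset.card_univ, Fintype.card_fin] using
      Finset.prod_le_mul_pow_card_sub_one (fun i _ => hpsd.eigenvalues_nonneg i)
        (fun i _ => heig_le i) (Finset.mem_univ k)
  · rw [Real.sqrt_le_left (by positivity)]
    nlinarith [heig_le k, (Nat.one_le_cast (α := ℝ)).mpr hn]

/-- If `p 0, …, p n` are the vertices of a `(θ,h)`-full Euclidean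
`n`-simplex (all edges `≤ h` and `det G ≥ θ² h^(2n)` for the Gram matrix `G` of the
edge vectors at `p 0`), then every eigenvalue `μ` of `G` satisfies
`θ h n^(1-n) ≤ √μ ≤ h n`. -/
theorem eigenvalue_bounds_of_full_simplex (n m : ℕ) (θ h : ℝ)
    (hθ : 0 < θ) (hh : 0 < h)
    (p : Fin (n + 1) → EuclideanSpace ℝ (Fin m))
    (G : Matrix (Fin n) (Fin n) ℝ)
    (hG : ∀ i j, G i j = ⟪p i.succ - p 0, p j.succ - p 0⟫)
    (hedge : ∀ i j, ‖p i - p j‖ ≤ h)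
    (hfull : θ ^ 2 * h ^ (2 * n) ≤ G.det)
    (μ : ℝ) (x : Fin n → ℝ) (hx : x ≠ 0) (heig : G.mulVec x = μ • x) :
    θ * h / (n : ℝ) ^ (n - 1) ≤ Real.sqrt μ ∧ Real.sqrt μ ≤ h * n :=
  eigenvalue_bounds_of_full_simplex_general n m θ h hh p G hG hedge hfull μ x hx heig
end

section
/- Let D ⊂ ℝⁿ be the convex hull of the points {0, e_1, …, e_n}, where e_1, …, e_n is the standard basis of ℝⁿ. Then every vector v ∈ ℝⁿ with ‖v‖ ≤ 1/n can be written as v = p − q with p, q ∈ D. -/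
/-!
With `n` the dimension, each coordinate of `v` satisfies `|vᵢ| ≤ ‖v‖ ≤ 1/n`. Hence the points
`c ± v/2`, where `c` has all coordinates `1/(2n)`, have coordinates in `[0, 1/n]`, so coordinate sum
at most `1`, and they lie in the simplex `conv{0, e₁, …, eₙ}`; their difference is `v`.
-/

open Finset

variable (ι : Type*) [Fintype ι] [DecidableEq ι]

def unitSimplex : Set (EuclideanSpace ℝ ι) :=
  convexHull ℝ ({0} ∪ Set.range fun i : ι => EuclideanSpace.single i (1 : ℝ))

variable {ι}

lemma mem_unitSimplex_of_nonneg_of_sum_le_one {x : EuclideanSpace ℝ ι} (hx₀ : ∀ i, 0 ≤ x i)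
    (hx₁ : ∑ i, x i ≤ 1) : x ∈ unitSimplex ι := by
  let w : Option ι → ℝ := fun o => o.elim (1 - ∑ i, x i) x
  let z : Option ι → EuclideanSpace ℝ ι := fun o => o.elim 0 (EuclideanSpace.single · 1)
  have hx : ∑ o, w o • z o = x := by
    simpa [w, z, Fintype.sum_option] using (EuclideanSpace.basisFun ι ℝ).sum_repr x
  rw [← hx]
  refine (convex_convexHull ℝ _).sum_mem ?_ ?_ ?_
  · rintro (_ | i) _
    · simpa [w] using hx₁
    · exact hx₀ i
  · simp [w, Fintype.sum_option]
  · rintro (_ | i) _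
    · exact subset_convexHull ℝ _ (Or.inl rfl)
    · exact subset_convexHull ℝ _ (Or.inr ⟨i, rfl⟩)

lemma toLp_add_div_two_mem_unitSimplex {w : EuclideanSpace ℝ ι}
    (hw : ∀ i, |w i| ≤ 1 / Fintype.card ι) :
    WithLp.toLp 2 (fun i => (1 / Fintype.card ι + w i) / 2) ∈ unitSimplex ι := by
  have hw' := fun i => abs_le.mp (hw i)
  refine mem_unitSimplex_of_nonneg_of_sum_le_one (fun i => ?_) ?_
  · linarith [(hw' i).1]
  · calc ∑ i, (1 / Fintype.card ι + w i) / 2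
        ≤ ∑ _i : ι, (1 / Fintype.card ι : ℝ) := sum_le_sum fun i _ => by linarith [(hw' i).2]
      _ ≤ 1 := by
        rw [sum_const, card_univ, nsmul_eq_mul, one_div]
        exact mul_inv_le_one

theorem exists_sub_eq_of_forall_abs_le {v : EuclideanSpace ℝ ι}
    (hv : ∀ i, |v i| ≤ 1 / Fintype.card ι) :
    ∃ p ∈ unitSimplex ι, ∃ q ∈ unitSimplex ι, v = p - q := by
  refine ⟨_, toLp_add_div_two_mem_unitSimplex hv, _, toLp_add_div_two_mem_unitSimplex (w := -v) ?_, ?_⟩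
  · simpa using hv
  · ext i
    simp only [PiLp.sub_apply, PiLp.neg_apply]
    ring

/-- Every vector `v ∈ ℝⁿ` with `‖v‖ ≤ 1/n` is a difference of two
points of the unit simplex `D = conv{0, e₁, …, eₙ}`. -/
theorem exists_diff_of_unit_simplex (n : ℕ) (v : EuclideanSpace ℝ (Fin n))
    (hv : ‖v‖ ≤ 1 / n) :
    ∃ p ∈ convexHull ℝ
        ({0} ∪ Set.range fun i : Fin n => EuclideanSpace.single i (1 : ℝ)),
      ∃ q ∈ convexHull ℝ
        ({0} ∪ Set.range fun i : Fin n => EuclideanSpace.single i (1 : ℝ)),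
        v = p - q := by
  have hcoord : ∀ i, |v i| ≤ 1 / Fintype.card (Fin n) := fun i => by
    simpa [Real.norm_eq_abs] using (PiLp.norm_apply_le v i).trans hv
  exact exists_sub_eq_of_forall_abs_le hcoord
end

section
/- Let p_0, …, p_n ∈ ℝ^m be the vertices of a (θ,h)-full Euclidean n-simplex, let v ∈ ℝ^{n+1} satisfy ∑_{i=0}^n v^i = 0, and let Y_0, …, Y_n be vectors in a real inner product space E. Then ‖∑_{i=0}^n v^i Y_i‖_E ≤ (n^n/(θ h)) · ‖∑_{i=0}^n v^i p_i‖ · ∑_{i=0}^n ‖Y_i‖_E. -/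
open scoped RealInnerProductSpace

/-- If `p 0, …, p n` are the vertices of a `(θ,h)`-full Euclidean
`n`-simplex, `v` is a sum-zero vector in `ℝ^{n+1}`, and `Y 0, …, Y n` are vectors in a
real inner product space `E`, then
`‖∑ vⁱ Yᵢ‖ ≤ (nⁿ/(θh)) ‖∑ vⁱ pᵢ‖ ∑ ‖Yᵢ‖`. -/
theorem norm_sum_smul_le_of_full_simplex (n m : ℕ) (θ h : ℝ)
    (hθ : 0 < θ) (hh : 0 < h)
    (p : Fin (n + 1) → EuclideanSpace ℝ (Fin m))
    (hedge : ∀ i j, ‖p i - p j‖ ≤ h)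
    (hfull : θ ^ 2 * h ^ (2 * n) ≤
      (Matrix.of fun i j : Fin n => ⟪p i.succ - p 0, p j.succ - p 0⟫).det)
    (E : Type*) [NormedAddCommGroup E] [InnerProductSpace ℝ E]
    (Y : Fin (n + 1) → E)
    (v : Fin (n + 1) → ℝ) (hv : ∑ i, v i = 0) :
    ‖∑ i, v i • Y i‖ ≤
      ((n : ℝ) ^ n / (θ * h)) * ‖∑ i, v i • p i‖ * ∑ i, ‖Y i‖ := by
  rcases Nat.eq_zero_or_pos n with hn | hn
  · subst hn
    have hv0 : v 0 = 0 := by simpa using hv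
    simp [Fin.sum_univ_one, hv0]
  obtain ⟨k, rfl⟩ : ∃ k, n = k + 1 := ⟨n - 1, (Nat.succ_pred_eq_of_pos hn).symm⟩
  push_cast
  set q : EuclideanSpace ℝ (Fin m) := ∑ i, v i • p i with hq
  set u : Fin (k + 1) → EuclideanSpace ℝ (Fin m) := fun j => p j.succ - p 0 with hu
  set G : Matrix (Fin (k + 1)) (Fin (k + 1)) ℝ :=
    Matrix.of fun i j => ⟪p i.succ - p 0, p j.succ - p 0⟫ with hG
  have hGu : ∀ a b, G a b = ⟪u a, u b⟫ := fun a b => rfl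
  set w : Fin (k + 1) → ℝ := fun j => v j.succ with hw
  have hGfull : θ ^ 2 * h ^ (2 * (k + 1)) ≤ G.det := hfull
  have hdetpos : (0 : ℝ) < G.det :=
    lt_of_lt_of_le (by positivity) hGfull
  have hunorm : ∀ j, ‖u j‖ ≤ h := fun j => hedge _ _
  have hGentry : ∀ a b, |G a b| ≤ h ^ 2 := by
    intro a b
    calc |G a b| = |⟪u a, u b⟫| := by rw [hGu]
      _ ≤ ‖u a‖ * ‖u b‖ := abs_real_inner_le_norm _ _
      _ ≤ h * h := mul_le_mul (hunorm a) (hunorm b) (norm_nonneg _)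
          (le_trans (norm_nonneg _) (hunorm a))
      _ = h ^ 2 := (sq h).symm
  -- q in terms of the edge vectors u
  have hqeq : q = ∑ j, w j • u j := by
    have hv0 : v 0 = -∑ j : Fin (k + 1), w j := by
      have := hv
      rw [Fin.sum_univ_succ] at this
      linarith [this]
    rw [hq, Fin.sum_univ_succ, hv0]
    simp only [hu, hw, smul_sub]
    rw [Finset.sum_sub_distrib, ← Finset.sum_smul]
    module
  -- bound on adjugate entries
  set adj : Matrix (Fin (k + 1)) (Fin (k + 1)) ℝ := G.adjugate with hadjdef
  have hadj : ∀ a b, |adj a b| ≤ ((k + 1).factorial : ℝ) * (h ^ 2) ^ k := by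
    intro a b
    have hc : (0 : ℝ) < h ^ 2 := by positivity
    set Gh : Matrix (Fin (k + 1)) (Fin (k + 1)) ℝ := (h ^ 2)⁻¹ • G with hGh
    have hGdecomp : G = (h ^ 2) • Gh := by
      rw [hGh, smul_smul, mul_inv_cancel₀ hc.ne', one_smul]
    have h1 : ∀ a b, |Gh a b| ≤ 1 := by
      intro a b
      rw [hGh, Matrix.smul_apply, smul_eq_mul, abs_mul, abs_inv, abs_of_pos hc,
        ← div_eq_inv_mul, div_le_one hc]
      exact hGentry a b
    have h2 : |Gh.adjugate a b| ≤ ((k + 1).factorial : ℝ) := by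
      rw [Matrix.adjugate_apply]
      have hbound : ∀ c d, AbsoluteValue.abs ((Gh.updateRow b (Pi.single a 1)) c d) ≤ (1 : ℝ) := by
        intro c d
        rcases eq_or_ne c b with rfl | hcb
        · rw [Matrix.updateRow_self]
          rcases eq_or_ne d a with rfl | hda
          · simp
          · simp [Pi.single_apply, hda.symm]
        · rw [Matrix.updateRow_ne hcb]
          exact h1 c d
      have := Matrix.det_le hbound
      simpa [Fintype.card_fin, nsmul_eq_mul] using this
    rw [hadjdef, hGdecomp, Matrix.adjugate_smul, Matrix.smul_apply, smul_eq_mul, abs_mul,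
      Fintype.card_fin]
    have h3 : |(h ^ 2) ^ (k + 1 - 1)| = (h ^ 2) ^ k := by
      rw [abs_pow, abs_of_pos hc]
      simp
    rw [h3]
    calc (h ^ 2) ^ k * |Gh.adjugate a b| ≤ (h ^ 2) ^ k * ((k + 1).factorial : ℝ) :=
          mul_le_mul_of_nonneg_left h2 (by positivity)
      _ = ((k + 1).factorial : ℝ) * (h ^ 2) ^ k := mul_comm _ _
  -- bilinear expansion helper
  have expand : ∀ r s : Fin (k + 1) → ℝ,
      ⟪∑ j, r j • u j, ∑ a, s a • u a⟫ = ∑ j, ∑ a, r j * (s a * G j a) := by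
    intro r s
    rw [sum_inner]
    refine Finset.sum_congr rfl fun j _ => ?_
    rw [real_inner_smul_left, inner_sum, Finset.mul_sum]
    refine Finset.sum_congr rfl fun a _ => ?_
    rw [real_inner_smul_right, hGu]
  -- key algebraic computation via the adjugate
  have key : ∀ (s : Fin (k + 1) → ℝ) (i : Fin (k + 1)),
      ∑ j, ∑ a, adj i j * (s a * G j a) = G.det * s i := by
    intro s i
    have hAG : ∀ a, ∑ j, adj i j * G j a = G.det * (if i = a then 1 else 0) := by
      intro a
      have h0 := congrFun (congrFun (Matrix.adjugate_mul G) i) a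
      simpa [Matrix.mul_apply, Matrix.one_apply] using h0
    rw [Finset.sum_comm]
    have hrow : ∀ a, ∑ j, adj i j * (s a * G j a) = (∑ j, adj i j * G j a) * s a := by
      intro a
      rw [Finset.sum_mul]
      exact Finset.sum_congr rfl fun j _ => by ring
    rw [Finset.sum_congr rfl fun a _ => hrow a]
    simp [hAG, ite_mul, Finset.sum_ite_eq]
  -- the coordinate bound
  have hwbound : ∀ i : Fin (k + 1), θ * h * |w i| ≤ ((k:ℝ) + 1) ^ k * ‖q‖ := by
    intro i
    set z : EuclideanSpace ℝ (Fin m) := ∑ j, (adj i j) • u j with hz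
    have key1 : ⟪z, q⟫ = G.det * w i := by
      rw [hz, hqeq, expand (fun j => adj i j) w, key w i]
    have key2 : ⟪z, z⟫ = G.det * adj i i := by
      rw [hz, expand (fun j => adj i j) (fun j => adj i j), key (fun j => adj i j) i]
    have hcs := real_inner_mul_inner_self_le z q
    rw [key1, key2, real_inner_self_eq_norm_sq q] at hcs
    -- hcs : (det * w i) * (det * w i) ≤ det * adj i i * ‖q‖^2
    have step1 : G.det * (w i) ^ 2 ≤ adj i i * ‖q‖ ^ 2 := by
      have h' : (G.det * (w i) ^ 2) * G.det ≤ (adj i i * ‖q‖ ^ 2) * G.det := by nlinarith [hcs]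
      exact le_of_mul_le_mul_right h' hdetpos
    have hadjii : adj i i ≤ ((k + 1).factorial : ℝ) * (h ^ 2) ^ k :=
      le_trans (le_abs_self _) (hadj i i)
    have hpowk : (0 : ℝ) < h ^ (2 * k) := by positivity
    have step2 : θ ^ 2 * h ^ 2 * (w i) ^ 2 ≤ ((k + 1).factorial : ℝ) * ‖q‖ ^ 2 := by
      have chain : (θ ^ 2 * h ^ 2 * (w i) ^ 2) * h ^ (2 * k) ≤
          (((k + 1).factorial : ℝ) * ‖q‖ ^ 2) * h ^ (2 * k) := by
        calc (θ ^ 2 * h ^ 2 * (w i) ^ 2) * h ^ (2 * k)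
            = (w i) ^ 2 * (θ ^ 2 * h ^ (2 * (k + 1))) := by ring
          _ ≤ (w i) ^ 2 * G.det := mul_le_mul_of_nonneg_left hGfull (sq_nonneg _)
          _ = G.det * (w i) ^ 2 := mul_comm _ _
          _ ≤ adj i i * ‖q‖ ^ 2 := step1
          _ ≤ (((k + 1).factorial : ℝ) * (h ^ 2) ^ k) * ‖q‖ ^ 2 :=
              mul_le_mul_of_nonneg_right hadjii (sq_nonneg _)
          _ = (((k + 1).factorial : ℝ) * ‖q‖ ^ 2) * h ^ (2 * k) := by ring
      exact le_of_mul_le_mul_right chain hpowk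
    have hfact : ((k + 1).factorial : ℝ) ≤ (((k:ℝ) + 1) ^ k) ^ 2 := by
      have : (k + 1).factorial ≤ ((k + 1) ^ k) ^ 2 := by
        rcases Nat.eq_zero_or_pos k with rfl | hk
        · simp
        · calc (k + 1).factorial ≤ (k + 1) ^ (k + 1) := (k + 1).factorial_le_pow
            _ ≤ (k + 1) ^ (2 * k) := Nat.pow_le_pow_right (by omega) (by omega)
            _ = ((k + 1) ^ k) ^ 2 := by rw [← pow_mul, Nat.mul_comm]
      exact_mod_cast this
    have hsq : (θ * h * |w i|) ^ 2 ≤ (((k:ℝ) + 1) ^ k * ‖q‖) ^ 2 := by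
      have e1 : (θ * h * |w i|) ^ 2 = θ ^ 2 * h ^ 2 * (w i) ^ 2 := by
        rw [mul_pow, mul_pow, sq_abs]
      rw [e1, mul_pow]
      calc θ ^ 2 * h ^ 2 * (w i) ^ 2 ≤ ((k + 1).factorial : ℝ) * ‖q‖ ^ 2 := step2
        _ ≤ (((k:ℝ) + 1) ^ k) ^ 2 * ‖q‖ ^ 2 := mul_le_mul_of_nonneg_right hfact (sq_nonneg _)
    have h1 : (0 : ℝ) ≤ θ * h * |w i| := by positivity
    have h2 : (0 : ℝ) ≤ ((k:ℝ) + 1) ^ k * ‖q‖ := by positivity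
    have h3 := Real.sqrt_le_sqrt hsq
    rwa [Real.sqrt_sq h1, Real.sqrt_sq h2] at h3
  -- from coordinates to all of v
  have hθh : (0 : ℝ) < θ * h := by positivity
  have hvbound : ∀ i : Fin (k + 1 + 1), |v i| ≤ ((k:ℝ) + 1) ^ (k + 1) / (θ * h) * ‖q‖ := by
    have haux : ∀ i : Fin (k + 1 + 1), θ * h * |v i| ≤ ((k:ℝ) + 1) ^ (k + 1) * ‖q‖ := by
      intro i
      induction i using Fin.cases with
      | zero =>
        have hv0 : v 0 = -∑ j : Fin (k + 1), w j := by
          have := hv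
          rw [Fin.sum_univ_succ] at this
          linarith [this]
        have habs : |v 0| ≤ ∑ j : Fin (k + 1), |w j| := by
          rw [hv0, abs_neg]
          exact Finset.abs_sum_le_sum_abs _ _
        calc θ * h * |v 0| ≤ θ * h * ∑ j : Fin (k + 1), |w j| :=
              mul_le_mul_of_nonneg_left habs (le_of_lt hθh)
          _ = ∑ j : Fin (k + 1), θ * h * |w j| := by rw [Finset.mul_sum]
          _ ≤ ∑ _j : Fin (k + 1), ((k:ℝ) + 1) ^ k * ‖q‖ := Finset.sum_le_sum fun j _ => hwbound j
          _ = ((k:ℝ) + 1) * (((k:ℝ) + 1) ^ k * ‖q‖) := by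
              rw [Finset.sum_const, Finset.card_univ, Fintype.card_fin, nsmul_eq_mul]
              push_cast; ring
          _ = ((k:ℝ) + 1) ^ (k + 1) * ‖q‖ := by ring
      | succ j =>
        calc θ * h * |v j.succ| = θ * h * |w j| := rfl
          _ ≤ ((k:ℝ) + 1) ^ k * ‖q‖ := hwbound j
          _ ≤ ((k:ℝ) + 1) ^ (k + 1) * ‖q‖ := by
              refine mul_le_mul_of_nonneg_right ?_ (norm_nonneg _)
              refine pow_le_pow_right₀ ?_ (by omega)
              exact_mod_cast Nat.one_le_iff_ne_zero.mpr (by omega)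
    intro i
    rw [div_mul_eq_mul_div, le_div_iff₀ hθh]
    calc |v i| * (θ * h) = θ * h * |v i| := mul_comm _ _
      _ ≤ ((k:ℝ) + 1) ^ (k + 1) * ‖q‖ := haux i
  -- conclusion
  calc ‖∑ i, v i • Y i‖ ≤ ∑ i, ‖v i • Y i‖ := norm_sum_le _ _
    _ = ∑ i, |v i| * ‖Y i‖ := by
        refine Finset.sum_congr rfl fun i _ => ?_
        rw [norm_smul, Real.norm_eq_abs]
    _ ≤ ∑ i, (((k:ℝ) + 1) ^ (k + 1) / (θ * h) * ‖q‖) * ‖Y i‖ :=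
        Finset.sum_le_sum fun i _ => mul_le_mul_of_nonneg_right (hvbound i) (norm_nonneg _)
    _ = ((k:ℝ) + 1) ^ (k + 1) / (θ * h) * ‖q‖ * ∑ i, ‖Y i‖ := by rw [← Finset.mul_sum]
end

section
/- There is a constant α > 0 depending only on n with the following property. Let p_0, …, p_n ∈ ℝ^m be the vertices of a (θ,h)-full Euclidean n-simplex with edge lengths ℓ_{ij} = ‖p_i − p_j‖ and Gram matrix g_{ij} = ⟨p_i − p_0, p_j − p_0⟩ (1 ≤ i, j ≤ n). Let ε < 1/2 and let ℓ̄_{ij} = ℓ̄_{ji} > 0 (for i ≠ j, with ℓ̄_{ii} = 0) be a system of numbers satisfying |ℓ_{ij} − ℓ̄_{ij}| ≤ α ε θ² ℓ_{ij} for all i, j. Define the symmetric matrix ḡ with entries ḡ_{ij} = (1/2)(ℓ̄_{0i}² + ℓ̄_{0j}² − ℓ̄_{ij}²) for 1 ≤ i, j ≤ n. Then ḡ is positive definite (so there exists a Euclidean n-simplex with edge lengths ℓ̄_{ij}), and |(g − ḡ)(v,v)| ≤ ε |v|_g² for every v ∈ ℝⁿ. -/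
/-!
The Gram matrix `g` of a `(θ,h)`-full simplex has entries at most `h²`, so `g ≤ n h² · 1`; as
`det g ≥ θ² h^{2n}`, every eigenvalue of `g` is at least `det g / (n h²)^{n-1}`, whence
`g ≥ (θ²/nⁿ) n h² · 1`. A relative error `t = αεθ²` in the edge lengths changes each squared
length by at most `3 t h²`, hence (by polarization) each entry of `ḡ` by at most `(9/2) t h²`, and
`|(g - ḡ)(v,v)| ≤ (9/2) n t h² |v|²`. For `α = 1/(5 nⁿ)` this is at most `ε g(v,v)`, and then
`ḡ(v,v) ≥ (1 - ε) g(v,v) > 0`.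
-/

open scoped RealInnerProductSpace
open Matrix Unitary

namespace Matrix

lemma posDef_of_posSemidef_sub_smul_one {ι : Type*} [DecidableEq ι] {A : Matrix ι ι ℝ} {c : ℝ}
    (hA : (A - c • 1).PosSemidef) (hc : 0 < c) : A.PosDef :=
  sub_add_cancel A _ ▸ PosDef.posSemidef_add hA (PosDef.one.smul hc)

section
variable {ι : Type*} [Fintype ι]

lemma dotProduct_mulVec_self_eq_sum (M : Matrix ι ι ℝ) (x : ι → ℝ) :
    x ⬝ᵥ M *ᵥ x = ∑ i, ∑ j, M i j * x i * x j := by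
  simp only [dotProduct, mulVec, Finset.mul_sum]
  exact Finset.sum_congr rfl fun i _ => Finset.sum_congr rfl fun j _ => by ring

lemma abs_dotProduct_mulVec_le {M : Matrix ι ι ℝ} {C : ℝ} (hM : ∀ i j, |M i j| ≤ C)
    (x : ι → ℝ) : |x ⬝ᵥ M *ᵥ x| ≤ C * Fintype.card ι * (x ⬝ᵥ x) := by
  rcases isEmpty_or_nonempty ι with hι | ⟨⟨i₀⟩⟩
  · simp [dotProduct]
  have hC : 0 ≤ C := (abs_nonneg _).trans (hM i₀ i₀)
  calc |x ⬝ᵥ M *ᵥ x| = |∑ i, ∑ j, x i * (M i j * x j)| := by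
        simp only [dotProduct, mulVec, Finset.mul_sum]
    _ ≤ ∑ i, ∑ j, C * (|x i| * |x j|) := by
        refine (Finset.abs_sum_le_sum_abs _ _).trans (Finset.sum_le_sum fun i _ => ?_)
        refine (Finset.abs_sum_le_sum_abs _ _).trans (Finset.sum_le_sum fun j _ => ?_)
        rw [abs_mul, abs_mul, mul_left_comm]
        exact mul_le_mul_of_nonneg_right (hM i j) (by positivity)
    _ = C * (∑ i, |x i|) ^ 2 := by
        simp only [← Finset.mul_sum, sq, Finset.sum_mul_sum]
    _ ≤ C * (Fintype.card ι * ∑ i, |x i| ^ 2) := by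
        gcongr
        simpa using sq_sum_le_card_mul_sum_sq (s := Finset.univ) (f := fun i => |x i|)
    _ = C * Fintype.card ι * (x ⬝ᵥ x) := by
        simp only [dotProduct, abs_mul_abs_self, sq, mul_assoc]

lemma PosDef.of_abs_dotProduct_sub_mulVec_le {G G' : Matrix ι ι ℝ} {ε : ℝ} (hG : G.PosDef)
    (hG' : G'.IsHermitian) (hε : ε < 1) (h : ∀ x, |x ⬝ᵥ (G - G') *ᵥ x| ≤ ε * (x ⬝ᵥ G *ᵥ x)) :
    G'.PosDef := by
  refine posDef_iff_dotProduct_mulVec.mpr ⟨hG', fun x hx => ?_⟩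
  have hpos : 0 < x ⬝ᵥ G *ᵥ x := by simpa using hG.dotProduct_mulVec_pos hx
  have hx := (le_abs_self _).trans (h x)
  rw [sub_mulVec, dotProduct_sub] at hx
  rw [star_trivial]
  nlinarith

variable [DecidableEq ι] {A : Matrix ι ι ℝ}

lemma IsHermitian.posSemidef_sub_smul_one_iff (hA : A.IsHermitian) (c : ℝ) :
    (A - c • 1).PosSemidef ↔ ∀ i, c ≤ hA.eigenvalues i := by
  have : A - c • 1 = conjStarAlgAut ℝ _ hA.eigenvectorUnitary
      (diagonal fun i => hA.eigenvalues i - c) := by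
    conv_lhs => rw [hA.spectral_theorem]
    rw [← diagonal_sub, map_sub, ← smul_one_eq_diagonal, map_smul, map_one]
    rfl
  rw [this]
  simp [isUnit_coe.posSemidef_star_right_conjugate_iff, posSemidef_diagonal_iff]

lemma IsHermitian.posSemidef_smul_one_sub_iff (hA : A.IsHermitian) (c : ℝ) :
    (c • 1 - A).PosSemidef ↔ ∀ i, hA.eigenvalues i ≤ c := by
  have : c • 1 - A = conjStarAlgAut ℝ _ hA.eigenvectorUnitary
      (diagonal fun i => c - hA.eigenvalues i) := by
    conv_lhs => rw [hA.spectral_theorem]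
    rw [← diagonal_sub, map_sub, ← smul_one_eq_diagonal, map_smul, map_one]
    rfl
  rw [this]
  simp [isUnit_coe.posSemidef_star_right_conjugate_iff, posSemidef_diagonal_iff]

lemma mul_dotProduct_self_le_of_posSemidef_sub_smul_one {c : ℝ} (hA : (A - c • 1).PosSemidef)
    (x : ι → ℝ) : c * (x ⬝ᵥ x) ≤ x ⬝ᵥ A *ᵥ x := by
  have := (posSemidef_iff_dotProduct_mulVec.mp hA).2 x
  rw [star_trivial, sub_mulVec, smul_mulVec, one_mulVec, dotProduct_sub, dotProduct_smul,
    smul_eq_mul] at this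
  linarith

lemma posSemidef_smul_one_sub_of_dotProduct_mulVec_le {c : ℝ} (hA : A.IsHermitian)
    (h : ∀ x, x ⬝ᵥ A *ᵥ x ≤ c * (x ⬝ᵥ x)) : (c • 1 - A).PosSemidef := by
  refine posSemidef_iff_dotProduct_mulVec.mpr
    ⟨(isHermitian_one.smul (IsSelfAdjoint.all c)).sub hA, fun x => ?_⟩
  rw [star_trivial, sub_mulVec, smul_mulVec, one_mulVec, dotProduct_sub, dotProduct_smul,
    smul_eq_mul, sub_nonneg]
  exact h x

lemma PosSemidef.det_le_pow {Λ : ℝ} (hA : A.PosSemidef) (hΛ : (Λ • 1 - A).PosSemidef) :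
    A.det ≤ Λ ^ Fintype.card ι := by
  have hle := (hA.isHermitian.posSemidef_smul_one_sub_iff Λ).mp hΛ
  rw [hA.isHermitian.det_eq_prod_eigenvalues, ← Finset.card_univ, ← Finset.prod_const]
  exact Finset.prod_le_prod (fun i _ => by simpa using hA.eigenvalues_nonneg i)
    (fun i _ => by simpa using hle i)

lemma PosSemidef.posSemidef_sub_smul_one_of_le_det {Λ D : ℝ} (hA : A.PosSemidef)
    (hΛ : (Λ • 1 - A).PosSemidef) (hΛ0 : 0 < Λ) (hdet : D * Λ ^ Fintype.card ι ≤ A.det) :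
    (A - (D * Λ) • 1).PosSemidef := by
  set μ := hA.isHermitian.eigenvalues
  have hμ0 : ∀ i, 0 ≤ μ i := hA.eigenvalues_nonneg
  have hμΛ := (hA.isHermitian.posSemidef_smul_one_sub_iff Λ).mp hΛ
  refine (hA.isHermitian.posSemidef_sub_smul_one_iff _).mpr fun i => ?_
  set others := Finset.univ.erase i
  have hcard : Fintype.card ι = others.card + 1 := by
    rw [Finset.card_erase_of_mem (Finset.mem_univ i), Finset.card_univ,
      Nat.sub_add_cancel (Fintype.card_pos_iff.mpr ⟨i⟩)]
  have hothers : ∏ j ∈ others, μ j ≤ Λ ^ others.card := by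
    rw [← Finset.prod_const]
    exact Finset.prod_le_prod (fun j _ => hμ0 j) (fun j _ => hμΛ j)
  refine le_of_mul_le_mul_right ?_ (pow_pos hΛ0 others.card)
  calc D * Λ * Λ ^ others.card = D * Λ ^ Fintype.card ι := by rw [hcard, pow_succ]; ring
    _ ≤ A.det := hdet
    _ = μ i * ∏ j ∈ others, μ j := by
        rw [hA.isHermitian.det_eq_prod_eigenvalues, Finset.mul_prod_erase _ _ (Finset.mem_univ i)]
        simp [μ]
    _ ≤ μ i * Λ ^ others.card := mul_le_mul_of_nonneg_left hothers (hμ0 i)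

lemma abs_dotProduct_sub_mulVec_le {G G' : Matrix ι ι ℝ} {c η ε : ℝ}
    (hG : (G - c • 1).PosSemidef) (hε : 0 ≤ ε) (hη : ∀ i j, |G i j - G' i j| ≤ η)
    (hηc : η * Fintype.card ι ≤ ε * c) (x : ι → ℝ) :
    |x ⬝ᵥ (G - G') *ᵥ x| ≤ ε * (x ⬝ᵥ G *ᵥ x) :=
  calc |x ⬝ᵥ (G - G') *ᵥ x| ≤ η * Fintype.card ι * (x ⬝ᵥ x) :=
        abs_dotProduct_mulVec_le (fun i j => by simpa using hη i j) x
    _ ≤ ε * c * (x ⬝ᵥ x) :=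
        mul_le_mul_of_nonneg_right hηc (by simpa using dotProduct_star_self_nonneg x)
    _ ≤ ε * (x ⬝ᵥ G *ᵥ x) := by
        rw [mul_assoc]
        exact mul_le_mul_of_nonneg_left (mul_dotProduct_self_le_of_posSemidef_sub_smul_one hG x) hε

lemma posSemidef_smul_one_sub_gram {E : Type*} [NormedAddCommGroup E] [InnerProductSpace ℝ E]
    {u : ι → E} {h : ℝ} (hu : ∀ i, ‖u i‖ ≤ h) :
    ((Fintype.card ι * h ^ 2) • 1 - gram ℝ u).PosSemidef := by
  have hentry : ∀ i j, |gram ℝ u i j| ≤ h ^ 2 := fun i j =>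
    calc |⟪u i, u j⟫| ≤ ‖u i‖ * ‖u j‖ := abs_real_inner_le_norm _ _
      _ ≤ h * h := mul_le_mul (hu i) (hu j) (norm_nonneg _) ((norm_nonneg _).trans (hu i))
      _ = h ^ 2 := (sq h).symm
  refine posSemidef_smul_one_sub_of_dotProduct_mulVec_le (isHermitian_gram ℝ u) fun x => ?_
  calc x ⬝ᵥ gram ℝ u *ᵥ x ≤ h ^ 2 * Fintype.card ι * (x ⬝ᵥ x) :=
        (le_abs_self _).trans (abs_dotProduct_mulVec_le hentry x)
    _ = Fintype.card ι * h ^ 2 * (x ⬝ᵥ x) := by ring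

end

end Matrix

lemma nonneg_of_abs_sub_le_mul {ℓ ℓ' t : ℝ} (hℓ : 0 ≤ ℓ) (hℓ' : 0 < ℓ')
    (h : |ℓ - ℓ'| ≤ t * ℓ) : 0 ≤ t := by
  by_contra! ht
  have := abs_nonneg (ℓ - ℓ')
  rcases hℓ.eq_or_lt with rfl | hℓ
  · rw [zero_sub, abs_neg, abs_of_pos hℓ'] at h
    linarith
  · nlinarith [mul_neg_of_neg_of_pos ht hℓ]

lemma abs_sq_sub_sq_le_of_abs_sub_le {ℓ ℓ' t : ℝ} (hℓ : 0 ≤ ℓ) (ht : t ≤ 1)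
    (h : |ℓ - ℓ'| ≤ t * ℓ) : |ℓ ^ 2 - ℓ' ^ 2| ≤ 3 * t * ℓ ^ 2 := by
  have htℓ : t * ℓ ≤ ℓ := by nlinarith [abs_nonneg (ℓ - ℓ')]
  obtain ⟨h₁, h₂⟩ := abs_le.mp h
  have hsum : |ℓ + ℓ'| ≤ 3 * ℓ := abs_le.mpr ⟨by linarith, by linarith⟩
  calc |ℓ ^ 2 - ℓ' ^ 2| = |ℓ - ℓ'| * |ℓ + ℓ'| := by rw [sq_sub_sq, abs_mul, mul_comm]
    _ ≤ t * ℓ * (3 * ℓ) := mul_le_mul h hsum (abs_nonneg _) ((abs_nonneg _).trans h)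
    _ = 3 * t * ℓ ^ 2 := by ring

noncomputable def edgeLengthGram {n : ℕ} (L : Fin (n + 1) → Fin (n + 1) → ℝ) :
    Matrix (Fin n) (Fin n) ℝ :=
  of fun i j => (1 / 2) * (L 0 i.succ ^ 2 + L 0 j.succ ^ 2 - L i.succ j.succ ^ 2)

section edgeLengthGram
variable {n : ℕ} {E : Type*} [NormedAddCommGroup E] [InnerProductSpace ℝ E]

lemma gram_sub_eq_edgeLengthGram (p : Fin (n + 1) → E) :
    gram ℝ (fun i : Fin n => p i.succ - p 0) = edgeLengthGram fun a b => ‖p a - p b‖ := by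
  ext i j
  rw [gram_apply, edgeLengthGram, of_apply, norm_sub_rev (p 0), norm_sub_rev (p 0),
    ← sub_sub_sub_cancel_right (p i.succ) (p j.succ) (p 0), norm_sub_sq_real (p i.succ - p 0)]
  ring

lemma isHermitian_edgeLengthGram {L : Fin (n + 1) → Fin (n + 1) → ℝ}
    (hL : ∀ a b, L a b = L b a) : (edgeLengthGram L).IsHermitian := by
  ext i j
  simp only [conjTranspose_apply, edgeLengthGram, of_apply, star_trivial, hL i.succ j.succ]
  ring

lemma abs_edgeLengthGram_sub_le {L L' : Fin (n + 1) → Fin (n + 1) → ℝ} {δ : ℝ}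
    (h : ∀ a b, |L a b ^ 2 - L' a b ^ 2| ≤ δ) (i j : Fin n) :
    |edgeLengthGram L i j - edgeLengthGram L' i j| ≤ 3 / 2 * δ := by
  have h₁ := abs_le.mp (h 0 i.succ)
  have h₂ := abs_le.mp (h 0 j.succ)
  have h₃ := abs_le.mp (h i.succ j.succ)
  simp only [edgeLengthGram, of_apply]
  exact abs_le.mpr ⟨by linarith, by linarith⟩

lemma abs_gram_sub_edgeLengthGram_le {p : Fin (n + 1) → E} {L : Fin (n + 1) → Fin (n + 1) → ℝ}
    {h t : ℝ} (hp : ∀ a b, ‖p a - p b‖ ≤ h) (ht0 : 0 ≤ t) (ht1 : t ≤ 1)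
    (hL : ∀ a b, |‖p a - p b‖ - L a b| ≤ t * ‖p a - p b‖) (i j : Fin n) :
    |gram ℝ (fun i : Fin n => p i.succ - p 0) i j - edgeLengthGram L i j| ≤ 9 / 2 * t * h ^ 2 := by
  have hsq : ∀ a b, |‖p a - p b‖ ^ 2 - L a b ^ 2| ≤ 3 * t * h ^ 2 := fun a b =>
    (abs_sq_sub_sq_le_of_abs_sub_le (norm_nonneg _) ht1 (hL a b)).trans (by gcongr; exact hp a b)
  rw [gram_sub_eq_edgeLengthGram]
  linarith [abs_edgeLengthGram_sub_le hsq i j]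

end edgeLengthGram

section fullGram
variable {n : ℕ} {E : Type*} [NormedAddCommGroup E] [InnerProductSpace ℝ E] {u : Fin n → E}
  {θ h : ℝ}

lemma sq_le_pow_self_of_le_det_gram (hh : 0 < h) (hu : ∀ i, ‖u i‖ ≤ h)
    (hdet : θ ^ 2 * h ^ (2 * n) ≤ (gram ℝ u).det) : θ ^ 2 ≤ n ^ n := by
  have := hdet.trans ((posSemidef_gram ℝ u).det_le_pow (posSemidef_smul_one_sub_gram hu))
  rw [Fintype.card_fin, mul_pow, ← pow_mul] at this
  exact le_of_mul_le_mul_right this (by positivity)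

lemma posSemidef_gram_sub_smul_one_of_le_det (hn : 0 < n) (hh : 0 < h) (hu : ∀ i, ‖u i‖ ≤ h)
    (hdet : θ ^ 2 * h ^ (2 * n) ≤ (gram ℝ u).det) :
    (gram ℝ u - (θ ^ 2 / n ^ n * (n * h ^ 2)) • 1).PosSemidef := by
  have hΛ := posSemidef_smul_one_sub_gram hu
  rw [Fintype.card_fin] at hΛ
  refine (posSemidef_gram ℝ u).posSemidef_sub_smul_one_of_le_det hΛ (by positivity) ?_
  calc θ ^ 2 / n ^ n * (n * h ^ 2) ^ Fintype.card (Fin n) = θ ^ 2 * h ^ (2 * n) := by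
        rw [Fintype.card_fin, mul_pow, ← pow_mul]
        field_simp
    _ ≤ _ := hdet

end fullGram

/-- There is a constant `α > 0` depending only on `n` such that:
if `p 0, …, p n` are the vertices of a `(θ,h)`-full Euclidean `n`-simplex with edge
lengths `ℓᵢⱼ = ‖pᵢ - pⱼ‖` and Gram matrix `gᵢⱼ = ⟪pᵢ - p₀, pⱼ - p₀⟫`, `ε < 1/2`,
and `ℓ̄ᵢⱼ` is a symmetric system of positive lengths with
`|ℓᵢⱼ - ℓ̄ᵢⱼ| ≤ α ε θ² ℓᵢⱼ`, then the matrix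
`ḡᵢⱼ = (1/2)(ℓ̄₀ᵢ² + ℓ̄₀ⱼ² - ℓ̄ᵢⱼ²)` is positive definite (so a Euclidean simplex
with edge lengths `ℓ̄ᵢⱼ` exists), and `|(g - ḡ)(v,v)| ≤ ε |v|_g²` for all `v`. -/
theorem exists_alpha_flat_metrics_close (n : ℕ) :
    ∃ α : ℝ, 0 < α ∧
      ∀ (m : ℕ) (θ h ε : ℝ), 0 < θ → 0 < h → ε < 1 / 2 →
        ∀ p : Fin (n + 1) → EuclideanSpace ℝ (Fin m),
          (∀ i j, ‖p i - p j‖ ≤ h) →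
          θ ^ 2 * h ^ (2 * n) ≤
            (Matrix.of fun i j : Fin n => ⟪p i.succ - p 0, p j.succ - p 0⟫).det →
        ∀ lbar : Fin (n + 1) → Fin (n + 1) → ℝ,
          (∀ i j, lbar i j = lbar j i) →
          (∀ i, lbar i i = 0) →
          (∀ i j, i ≠ j → 0 < lbar i j) →
          (∀ i j, |‖p i - p j‖ - lbar i j| ≤ α * ε * θ ^ 2 * ‖p i - p j‖) →
          (Matrix.of fun i j : Fin n =>
            (1 / 2) * (lbar 0 i.succ ^ 2 + lbar 0 j.succ ^ 2 -
              lbar i.succ j.succ ^ 2)).PosDef ∧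
          ∀ v : Fin n → ℝ,
            |∑ i, ∑ j, (⟪p i.succ - p 0, p j.succ - p 0⟫ -
                (1 / 2) * (lbar 0 i.succ ^ 2 + lbar 0 j.succ ^ 2 -
                  lbar i.succ j.succ ^ 2)) * v i * v j| ≤
              ε * ∑ i, ∑ j, ⟪p i.succ - p 0, p j.succ - p 0⟫ * v i * v j := by
  have hnn : (0 : ℝ) < n ^ n := by exact_mod_cast Nat.pow_self_pos
  refine ⟨1 / (5 * n ^ n), by positivity, ?_⟩
  intro m θ h ε hθ hh hε p hp hdet lbar hsymm _ hpos happ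
  rcases n.eq_zero_or_pos with rfl | hn
  · refine ⟨?_, fun v => by simp⟩
    convert (PosDef.one : (1 : Matrix (Fin 0) (Fin 0) ℝ).PosDef) using 1
    exact Subsingleton.elim _ _
  have hu : ∀ i : Fin n, ‖p i.succ - p 0‖ ≤ h := fun i => hp i.succ 0
  have hs1 : θ ^ 2 / n ^ n ≤ 1 :=
    (div_le_one hnn).mpr (sq_le_pow_self_of_le_det_gram hh hu hdet)
  have hG := posSemidef_gram_sub_smul_one_of_le_det hn hh hu hdet
  set s := θ ^ 2 / n ^ n with hs
  have hαθ : 1 / (5 * n ^ n) * ε * θ ^ 2 = ε * s / 5 := by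
    rw [hs]
    field_simp
  simp only [hαθ] at happ
  have hε0 : 0 ≤ ε := by
    have := nonneg_of_abs_sub_le_mul (norm_nonneg _)
      (hpos 0 (⟨0, hn⟩ : Fin n).succ (Fin.succ_ne_zero _).symm) (happ _ _)
    nlinarith [show 0 < s by positivity]
  have hentry := abs_gram_sub_edgeLengthGram_le hp (by positivity) (by nlinarith) happ
  have hclose := abs_dotProduct_sub_mulVec_le hG hε0 hentry (by
    have : 0 ≤ ε * s * n * h ^ 2 := by positivity
    rw [Fintype.card_fin]
    linarith)
  refine ⟨(posDef_of_posSemidef_sub_smul_one hG (by positivity)).of_abs_dotProduct_sub_mulVec_le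
    (isHermitian_edgeLengthGram hsymm) (by linarith) hclose, fun v => ?_⟩
  simpa [dotProduct_mulVec_self_eq_sum, edgeLengthGram, sub_mul] using hclose v
end

section
/- Let τ > 0 and let U : [0,τ] → ℝ^m be a C² function satisfying the linear second-order differential equation U''(t) = A(t) U(t) + B(t) for continuous A : [0,τ] → ℝ^{m×m} and B : [0,τ] → ℝ^m, with boundary conditions U(0) = U(τ) = 0. If ‖A(t)‖ τ² ≤ 1 for all t ∈ [0,τ], then ‖U'(t)‖ ≤ 3 τ · sup_{s∈[0,τ]} ‖B(s)‖ for every t ∈ [0,τ]. -/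
/-!
Let `M = ‖U' t₀‖` be the maximum of `‖U'‖` on `[0, τ]`. Since `U 0 = 0`, `‖U‖ ≤ M τ`, so the
equation and `‖A‖ τ² ≤ 1` give `‖U''‖ ≤ M / τ + b`; hence `U'` is `(M / τ + b)`-Lipschitz.
Expanding `U` to first order around `t₀` on both sides and using `U 0 = U τ = 0` yields
`τ M = ‖U τ - U 0 - τ U' t₀‖ ≤ (M / τ + b) τ² / 2`, i.e. `M ≤ τ b`.
-/

open Set

section FirstOrderExpansion

variable {E : Type*} [NormedAddCommGroup E] [NormedSpace ℝ E] {f f' : ℝ → E} {a b c K : ℝ}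

theorem hasDerivWithinAt_Ici_of_Icc (hf : ∀ x ∈ Icc a b, HasDerivWithinAt f (f' x) (Icc a b) x) :
    ∀ x ∈ Ico a b, HasDerivWithinAt f (f' x) (Ici x) x := fun x hx =>
  (hf x (Ico_subset_Icc_self hx)).mono_of_mem_nhdsWithin (Icc_mem_nhdsGE_of_mem hx)

theorem norm_sub_sub_smul_deriv_left_le (hab : a ≤ b)
    (hf : ∀ x ∈ Icc a b, HasDerivWithinAt f (f' x) (Icc a b) x)
    (hf' : ∀ x ∈ Icc a b, ‖f' x - f' a‖ ≤ K * (x - a)) :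
    ‖f b - f a - (b - a) • f' a‖ ≤ K / 2 * (b - a) ^ 2 := by
  set g : ℝ → E := fun x => f x - f a - (x - a) • f' a
  have hg : ∀ x ∈ Icc a b, HasDerivWithinAt g (f' x - f' a) (Icc a b) x := fun x hx =>
    (((hf x hx).sub_const (f a)).sub
      (((hasDerivAt_id x).sub_const a).smul_const (f' a)).hasDerivWithinAt).congr_deriv (by simp)
  have hB : ∀ x, HasDerivAt (fun x => K / 2 * (x - a) ^ 2) (K * (x - a)) x := fun x =>
    ((((hasDerivAt_id' x).sub_const a).pow 2).const_mul (K / 2)).congr_deriv (by ring)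
  exact image_norm_le_of_norm_deriv_right_le_deriv_boundary
    (fun x hx => (hg x hx).continuousWithinAt) (hasDerivWithinAt_Ici_of_Icc hg) (by simp [g]) hB
    (fun x hx => hf' x (Ico_subset_Icc_self hx)) (right_mem_Icc.2 hab)

theorem norm_sub_sub_smul_deriv_right_le (hab : a ≤ b)
    (hf : ∀ x ∈ Icc a b, HasDerivWithinAt f (f' x) (Icc a b) x)
    (hf' : ∀ x ∈ Icc a b, ‖f' x - f' b‖ ≤ K * (b - x)) :
    ‖f b - f a - (b - a) • f' b‖ ≤ K / 2 * (b - a) ^ 2 := by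
  set g : ℝ → E := fun x => f x - f a - (x - a) • f' b
  have hg : ∀ x ∈ Icc a b, HasDerivWithinAt g (f' x - f' b) (Icc a b) x := fun x hx =>
    (((hf x hx).sub_const (f a)).sub
      (((hasDerivAt_id x).sub_const a).smul_const (f' b)).hasDerivWithinAt).congr_deriv (by simp)
  have hB : ∀ x, HasDerivAt (fun x => K / 2 * ((b - a) ^ 2 - (b - x) ^ 2)) (K * (b - x)) x :=
    fun x => ((((hasDerivAt_id' x).const_sub b).pow 2).const_sub ((b - a) ^ 2)
      |>.const_mul (K / 2)).congr_deriv (by ring)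
  simpa using image_norm_le_of_norm_deriv_right_le_deriv_boundary
    (fun x hx => (hg x hx).continuousWithinAt) (hasDerivWithinAt_Ici_of_Icc hg) (by simp [g]) hB
    (fun x hx => hf' x (Ico_subset_Icc_self hx)) (right_mem_Icc.2 hab)

theorem norm_sub_sub_smul_deriv_le_of_lipschitzOn (hK : 0 ≤ K) (hc : c ∈ Icc a b)
    (hf : ∀ x ∈ Icc a b, HasDerivWithinAt f (f' x) (Icc a b) x)
    (hf' : ∀ x ∈ Icc a b, ∀ y ∈ Icc a b, ‖f' y - f' x‖ ≤ K * ‖y - x‖) :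
    ‖f b - f a - (b - a) • f' c‖ ≤ K / 2 * (b - a) ^ 2 := by
  have hac : Icc a c ⊆ Icc a b := Icc_subset_Icc_right hc.2
  have hcb : Icc c b ⊆ Icc a b := Icc_subset_Icc_left hc.1
  have hleft : ‖f c - f a - (c - a) • f' c‖ ≤ K / 2 * (c - a) ^ 2 :=
    norm_sub_sub_smul_deriv_right_le hc.1 (fun x hx => (hf x (hac hx)).mono hac) fun x hx => by
      simpa [Real.norm_of_nonpos (sub_nonpos.2 hx.2)] using hf' c hc x (hac hx)
  have hright : ‖f b - f c - (b - c) • f' c‖ ≤ K / 2 * (b - c) ^ 2 :=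
    norm_sub_sub_smul_deriv_left_le hc.2 (fun x hx => (hf x (hcb hx)).mono hcb) fun x hx => by
      simpa [Real.norm_of_nonneg (sub_nonneg.2 hx.1)] using hf' c hc x (hcb hx)
  calc ‖f b - f a - (b - a) • f' c‖
      = ‖(f b - f c - (b - c) • f' c) + (f c - f a - (c - a) • f' c)‖ := by
        congr 1; module
    _ ≤ K / 2 * (b - c) ^ 2 + K / 2 * (c - a) ^ 2 := norm_add_le_of_le hright hleft
    _ ≤ K / 2 * (b - a) ^ 2 := by
      nlinarith [mul_nonneg hK (mul_nonneg (sub_nonneg.2 hc.1) (sub_nonneg.2 hc.2))]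

end FirstOrderExpansion

theorem norm_apply_add_le_of_opNorm_mul_sq_le {E F : Type*} [SeminormedAddCommGroup E]
    [SeminormedAddCommGroup F] [NormedSpace ℝ E] [NormedSpace ℝ F] {A : E →L[ℝ] F} {u : E}
    {v : F} {τ M b : ℝ} (hτ : 0 < τ) (hA : ‖A‖ * τ ^ 2 ≤ 1) (hu : ‖u‖ ≤ M * τ) (hv : ‖v‖ ≤ b) :
    ‖A u + v‖ ≤ M / τ + b := by
  have hM : 0 ≤ M := nonneg_of_mul_nonneg_left ((norm_nonneg u).trans hu) hτ
  have hAu : ‖A‖ * ‖u‖ ≤ M / τ := by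
    rw [le_div_iff₀ hτ]
    nlinarith [mul_le_mul_of_nonneg_left hu (norm_nonneg A), mul_le_mul_of_nonneg_left hA hM]
  exact norm_add_le_of_le ((A.le_opNorm u).trans hAu) hv

theorem deriv_bound_of_second_order_ODE_general (m : ℕ) (τ : ℝ) (hτ : 0 < τ)
    (U U' U'' : ℝ → EuclideanSpace ℝ (Fin m))
    (A : ℝ → EuclideanSpace ℝ (Fin m) →L[ℝ] EuclideanSpace ℝ (Fin m))
    (B : ℝ → EuclideanSpace ℝ (Fin m))
    (hU' : ∀ t ∈ Set.Icc 0 τ, HasDerivWithinAt U (U' t) (Set.Icc 0 τ) t)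
    (hU'' : ∀ t ∈ Set.Icc 0 τ, HasDerivWithinAt U' (U'' t) (Set.Icc 0 τ) t)
    (hODE : ∀ t ∈ Set.Icc 0 τ, U'' t = A t (U t) + B t)
    (hbdry0 : U 0 = 0) (hbdryτ : U τ = 0)
    (hAnorm : ∀ t ∈ Set.Icc 0 τ, ‖A t‖ * τ ^ 2 ≤ 1)
    (b : ℝ) (hb : ∀ s ∈ Set.Icc 0 τ, ‖B s‖ ≤ b)
    (t : ℝ) (ht : t ∈ Set.Icc 0 τ) :
    ‖U' t‖ ≤ 3 * τ * b := by
  have h0 : (0 : ℝ) ∈ Icc 0 τ := left_mem_Icc.2 hτ.le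
  have hb0 : 0 ≤ b := (norm_nonneg _).trans (hb 0 h0)
  have hU'cont : ContinuousOn U' (Icc 0 τ) := fun x hx => (hU'' x hx).continuousWithinAt
  obtain ⟨t₀, ht₀, hmax⟩ := isCompact_Icc.exists_isMaxOn (nonempty_Icc.2 hτ.le) hU'cont.norm
  set M := ‖U' t₀‖
  have hU : ∀ s ∈ Icc 0 τ, ‖U s‖ ≤ M * τ := fun s hs => by
    have := Convex.norm_image_sub_le_of_norm_hasDerivWithin_le hU' (fun x hx => hmax hx)
      (convex_Icc 0 τ) h0 hs
    rw [hbdry0, sub_zero, sub_zero, Real.norm_of_nonneg hs.1] at this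
    exact this.trans (mul_le_mul_of_nonneg_left hs.2 (norm_nonneg _))
  have hU''_le : ∀ s ∈ Icc 0 τ, ‖U'' s‖ ≤ M / τ + b := fun s hs =>
    hODE s hs ▸ norm_apply_add_le_of_opNorm_mul_sq_le hτ (hAnorm s hs) (hU s hs) (hb s hs)
  have hexp := norm_sub_sub_smul_deriv_le_of_lipschitzOn (by positivity) ht₀ hU'
    fun x hx y hy => Convex.norm_image_sub_le_of_norm_hasDerivWithin_le hU'' hU''_le
      (convex_Icc 0 τ) hx hy
  simp only [hbdry0, hbdryτ, sub_zero, zero_sub, norm_neg, norm_smul, Real.norm_of_nonneg hτ.le]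
    at hexp
  have hMb : M ≤ τ * b := by
    have h : τ * M ≤ τ * ((M + τ * b) / 2) := hexp.trans_eq (by field_simp)
    linarith [le_of_mul_le_mul_left h hτ]
  calc ‖U' t‖ ≤ M := hmax ht
    _ ≤ τ * b := hMb
    _ ≤ 3 * τ * b := by linarith [mul_nonneg hτ.le hb0]

/-- Let `U : [0,τ] → ℝ^m` be C² with `U(0) = U(τ) = 0`, satisfying
`U'' = A U + B` on `[0,τ]` for continuous `A`, `B`. If `‖A(t)‖ τ² ≤ 1` on `[0,τ]`,
then `‖U'(t)‖ ≤ 3 τ sup ‖B‖` on `[0,τ]` (the sup being encoded by any upper bound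
`b` of `‖B‖` on `[0,τ]`). -/
theorem deriv_bound_of_second_order_ODE (m : ℕ) (τ : ℝ) (hτ : 0 < τ)
    (U U' U'' : ℝ → EuclideanSpace ℝ (Fin m))
    (A : ℝ → EuclideanSpace ℝ (Fin m) →L[ℝ] EuclideanSpace ℝ (Fin m))
    (B : ℝ → EuclideanSpace ℝ (Fin m))
    (hA : ContinuousOn A (Set.Icc 0 τ)) (hB : ContinuousOn B (Set.Icc 0 τ))
    (hU' : ∀ t ∈ Set.Icc 0 τ, HasDerivWithinAt U (U' t) (Set.Icc 0 τ) t)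
    (hU'' : ∀ t ∈ Set.Icc 0 τ, HasDerivWithinAt U' (U'' t) (Set.Icc 0 τ) t)
    (hU''cont : ContinuousOn U'' (Set.Icc 0 τ))
    (hODE : ∀ t ∈ Set.Icc 0 τ, U'' t = A t (U t) + B t)
    (hbdry0 : U 0 = 0) (hbdryτ : U τ = 0)
    (hAnorm : ∀ t ∈ Set.Icc 0 τ, ‖A t‖ * τ ^ 2 ≤ 1)
    (b : ℝ) (hb : ∀ s ∈ Set.Icc 0 τ, ‖B s‖ ≤ b)
    (t : ℝ) (ht : t ∈ Set.Icc 0 τ) :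
    ‖U' t‖ ≤ 3 * τ * b :=
  deriv_bound_of_second_order_ODE_general m τ hτ U U' U'' A B hU' hU'' hODE hbdry0 hbdryτ hAnorm b
    hb t ht
end

section
/- Let τ > 0 and let U : [0,τ] → ℝ^m be a C² function satisfying U''(t) = A(t) U(t) + B(t) for continuous A : [0,τ] → ℝ^{m×m} and B : [0,τ] → ℝ^m, with boundary conditions U(0) = U(τ) = 0. If ‖A(t)‖ τ² ≤ 1 for all t ∈ [0,τ], then sup_{t∈[0,τ]} ‖U(t)‖ ≤ τ² · sup_{s∈[0,τ]} ‖B(s)‖. -/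
/-!
Maximum principle argument. If `u(a) = u(b) = 0` and `‖u''‖ ≤ K`, then testing against the
direction of `u t` reduces to a scalar function `g` with `g'' ≥ -K`; adding `K/2 (s-a)(s-b)`
makes it convex with zero boundary values, so `‖u t‖ ≤ K (b-a)² / 8`. Applied to the
solution `U` with `M = max ‖U‖`, the equation gives `‖U''‖ ≤ M/τ² + b`, hence
`M ≤ (M + b τ²)/8`, i.e. `M ≤ b τ² / 7`.
-/

open Set

theorem le_half_mul_of_hasDerivWithinAt2_ge_neg {a b K : ℝ} {g g' g'' : ℝ → ℝ}
    (hg : ∀ s ∈ Icc a b, HasDerivWithinAt g (g' s) (Icc a b) s)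
    (hg' : ∀ s ∈ Icc a b, HasDerivWithinAt g' (g'' s) (Icc a b) s)
    (hK : ∀ s ∈ Icc a b, -K ≤ g'' s) (ha : g a = 0) (hb : g b = 0)
    {t : ℝ} (ht : t ∈ Icc a b) :
    g t ≤ K / 2 * ((t - a) * (b - t)) := by
  have hpoly : ∀ s,
      HasDerivAt (fun s => K / 2 * ((s - a) * (s - b))) (K * s - K * (a + b) / 2) s := fun s =>
    (((hasDerivAt_id' s).sub_const a).mul ((hasDerivAt_id' s).sub_const b)).const_mul (K / 2)
      |>.congr_deriv (by ring)
  have hlin : ∀ s, HasDerivAt (fun s => K * s - K * (a + b) / 2) K s :=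
    fun s => ((hasDerivAt_id' s).const_mul K).sub_const _ |>.congr_deriv (mul_one K)
  have hconvex : ConvexOn ℝ (Icc a b) fun s => g s + K / 2 * ((s - a) * (s - b)) := by
    refine convexOn_of_hasDerivWithinAt2_nonneg (f' := fun s => g' s + (K * s - K * (a + b) / 2))
      (f'' := fun s => g'' s + K) (convex_Icc a b)
      (fun s hs => (hg s hs).continuousWithinAt.add (hpoly s).continuousAt.continuousWithinAt)
      ?_ ?_ ?_ <;> rw [interior_Icc] <;> intro s hs
    · exact ((hg s (Ioo_subset_Icc_self hs)).mono Ioo_subset_Icc_self).add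
        (hpoly s).hasDerivWithinAt
    · exact ((hg' s (Ioo_subset_Icc_self hs)).mono Ioo_subset_Icc_self).add
        (hlin s).hasDerivWithinAt
    · linarith [hK s (Ioo_subset_Icc_self hs)]
  have hab : a ≤ b := ht.1.trans ht.2
  have := hconvex.le_on_segment (left_mem_Icc.2 hab) (right_mem_Icc.2 hab)
    (segment_eq_Icc hab ▸ ht)
  simp only [ha, hb, sub_self, mul_zero, zero_mul, add_zero, max_self] at this
  nlinarith

theorem norm_le_half_mul_of_norm_hasDerivWithinAt2_le {E : Type*} [NormedAddCommGroup E]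
    [InnerProductSpace ℝ E] {a b K : ℝ} {u u' u'' : ℝ → E}
    (hu : ∀ s ∈ Icc a b, HasDerivWithinAt u (u' s) (Icc a b) s)
    (hu' : ∀ s ∈ Icc a b, HasDerivWithinAt u' (u'' s) (Icc a b) s)
    (hK : ∀ s ∈ Icc a b, ‖u'' s‖ ≤ K) (ha : u a = 0) (hb : u b = 0)
    {t : ℝ} (ht : t ∈ Icc a b) :
    ‖u t‖ ≤ K / 2 * ((t - a) * (b - t)) := by
  have hscalar : ‖u t‖ ^ 2 ≤ K * ‖u t‖ / 2 * ((t - a) * (b - t)) := by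
    rw [← real_inner_self_eq_norm_sq]
    refine le_half_mul_of_hasDerivWithinAt2_ge_neg (g' := fun s => inner ℝ (u' s) (u t))
      (g'' := fun s => inner ℝ (u'' s) (u t))
      (fun s hs => (hu s hs).inner ℝ (hasDerivWithinAt_const s _ (u t)) |>.congr_deriv (by simp))
      (fun s hs => (hu' s hs).inner ℝ (hasDerivWithinAt_const s _ (u t)) |>.congr_deriv (by simp))
      (fun s hs => ?_) (by simp [ha]) (by simp [hb]) ht
    have := (abs_le.1 (abs_real_inner_le_norm (u'' s) (u t))).1
    nlinarith [hK s hs, norm_nonneg (u t)]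
  have hK0 : 0 ≤ K := (norm_nonneg _).trans (hK t ht)
  have hwidth : 0 ≤ (t - a) * (b - t) := mul_nonneg (sub_nonneg.2 ht.1) (sub_nonneg.2 ht.2)
  nlinarith [norm_nonneg (u t), mul_nonneg hK0 hwidth]

theorem sup_bound_of_second_order_ODE_general (m : ℕ) (τ : ℝ) (hτ : 0 < τ)
    (U U' U'' : ℝ → EuclideanSpace ℝ (Fin m))
    (A : ℝ → EuclideanSpace ℝ (Fin m) →L[ℝ] EuclideanSpace ℝ (Fin m))
    (B : ℝ → EuclideanSpace ℝ (Fin m))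
    (hU' : ∀ t ∈ Set.Icc 0 τ, HasDerivWithinAt U (U' t) (Set.Icc 0 τ) t)
    (hU'' : ∀ t ∈ Set.Icc 0 τ, HasDerivWithinAt U' (U'' t) (Set.Icc 0 τ) t)
    (hODE : ∀ t ∈ Set.Icc 0 τ, U'' t = A t (U t) + B t)
    (hbdry0 : U 0 = 0) (hbdryτ : U τ = 0)
    (hAnorm : ∀ t ∈ Set.Icc 0 τ, ‖A t‖ * τ ^ 2 ≤ 1)
    (b : ℝ) (hb : ∀ s ∈ Set.Icc 0 τ, ‖B s‖ ≤ b)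
    (t : ℝ) (ht : t ∈ Set.Icc 0 τ) :
    ‖U t‖ ≤ τ ^ 2 * b := by
  have hτ2 : 0 < τ ^ 2 := by positivity
  obtain ⟨t₀, ht₀, hmax⟩ := isCompact_Icc.exists_isMaxOn (nonempty_Icc.2 hτ.le)
    (fun s hs => (hU' s hs).continuousWithinAt.norm)
  set M := ‖U t₀‖
  have hU''_le : ∀ s ∈ Icc 0 τ, ‖U'' s‖ ≤ M / τ ^ 2 + b := fun s hs => by
    have hAs : ‖A s‖ ≤ 1 / τ ^ 2 := (le_div_iff₀ hτ2).2 (hAnorm s hs)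
    calc ‖U'' s‖ ≤ ‖A s‖ * ‖U s‖ + ‖B s‖ :=
          hODE s hs ▸ norm_add_le_of_le ((A s).le_opNorm _) le_rfl
      _ ≤ 1 / τ ^ 2 * M + b :=
        add_le_add (mul_le_mul hAs (hmax hs) (norm_nonneg _) (by positivity)) (hb s hs)
      _ = M / τ ^ 2 + b := by ring
  have hM := norm_le_half_mul_of_norm_hasDerivWithinAt2_le hU' hU'' hU''_le hbdry0 hbdryτ ht₀
  have hb0 : 0 ≤ b := (norm_nonneg _).trans (hb 0 (left_mem_Icc.2 hτ.le))
  have hM7 : 7 * M ≤ b * τ ^ 2 := by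
    have hwidth : t₀ * (τ - t₀) ≤ τ ^ 2 / 4 := by nlinarith [sq_nonneg (τ - 2 * t₀)]
    have : M ≤ (M / τ ^ 2 + b) * τ ^ 2 / 8 := by
      have hK0 : 0 ≤ M / τ ^ 2 + b := by positivity
      rw [sub_zero] at hM
      nlinarith [mul_le_mul_of_nonneg_left hwidth hK0]
    rw [add_mul, div_mul_cancel₀ _ hτ2.ne'] at this
    linarith
  calc ‖U t‖ ≤ M := hmax ht
    _ ≤ τ ^ 2 * b := by linarith [norm_nonneg (U t₀)]

/-- Let `U : [0,τ] → ℝ^m` be C² with `U(0) = U(τ) = 0`, satisfying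
`U'' = A U + B` on `[0,τ]` for continuous `A`, `B`. If `‖A(t)‖ τ² ≤ 1` on `[0,τ]`,
then `‖U(t)‖ ≤ τ² sup ‖B‖` on `[0,τ]` (the sup being encoded by any upper bound `b`
of `‖B‖` on `[0,τ]`). -/
theorem sup_bound_of_second_order_ODE (m : ℕ) (τ : ℝ) (hτ : 0 < τ)
    (U U' U'' : ℝ → EuclideanSpace ℝ (Fin m))
    (A : ℝ → EuclideanSpace ℝ (Fin m) →L[ℝ] EuclideanSpace ℝ (Fin m))
    (B : ℝ → EuclideanSpace ℝ (Fin m))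
    (hA : ContinuousOn A (Set.Icc 0 τ)) (hB : ContinuousOn B (Set.Icc 0 τ))
    (hU' : ∀ t ∈ Set.Icc 0 τ, HasDerivWithinAt U (U' t) (Set.Icc 0 τ) t)
    (hU'' : ∀ t ∈ Set.Icc 0 τ, HasDerivWithinAt U' (U'' t) (Set.Icc 0 τ) t)
    (hU''cont : ContinuousOn U'' (Set.Icc 0 τ))
    (hODE : ∀ t ∈ Set.Icc 0 τ, U'' t = A t (U t) + B t)
    (hbdry0 : U 0 = 0) (hbdryτ : U τ = 0)
    (hAnorm : ∀ t ∈ Set.Icc 0 τ, ‖A t‖ * τ ^ 2 ≤ 1)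
    (b : ℝ) (hb : ∀ s ∈ Set.Icc 0 τ, ‖B s‖ ≤ b)
    (t : ℝ) (ht : t ∈ Set.Icc 0 τ) :
    ‖U t‖ ≤ τ ^ 2 * b :=
  sup_bound_of_second_order_ODE_general m τ hτ U U' U'' A B hU' hU'' hODE hbdry0 hbdryτ hAnorm b hb
    t ht
end

section
/- Let τ > 0, C₀ ≥ 0, and let J : [0,τ] → ℝ^m be a C² function with J(0) = 0, ‖J''(t)‖ ≤ C₀ ‖J(t)‖ for all t ∈ [0,τ], and ‖J(t)‖ ≤ ‖J(τ)‖ for all t ∈ [0,τ]. Then ‖J(τ) − τ J'(τ)‖ ≤ (1/2) C₀ τ² ‖J(τ)‖, and consequently τ ‖J'(τ)‖ ≤ (1 + (1/2) C₀ τ²) ‖J(τ)‖. -/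
/-- Let `J : [0,τ] → ℝ^m` be C² with `J(0) = 0`,
`‖J''(t)‖ ≤ C₀ ‖J(t)‖` and `‖J(t)‖ ≤ ‖J(τ)‖` on `[0,τ]`. Then
`‖J(τ) - τ J'(τ)‖ ≤ (1/2) C₀ τ² ‖J(τ)‖` and consequently
`τ ‖J'(τ)‖ ≤ (1 + (1/2) C₀ τ²) ‖J(τ)‖`. -/
theorem jacobi_field_boundary_value_estimate (m : ℕ) (τ C₀ : ℝ)
    (hτ : 0 < τ) (hC₀ : 0 ≤ C₀)
    (J J' J'' : ℝ → EuclideanSpace ℝ (Fin m))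
    (hJ' : ∀ t ∈ Set.Icc 0 τ, HasDerivWithinAt J (J' t) (Set.Icc 0 τ) t)
    (hJ'' : ∀ t ∈ Set.Icc 0 τ, HasDerivWithinAt J' (J'' t) (Set.Icc 0 τ) t)
    (hJ''cont : ContinuousOn J'' (Set.Icc 0 τ))
    (hJ0 : J 0 = 0)
    (hbound : ∀ t ∈ Set.Icc 0 τ, ‖J'' t‖ ≤ C₀ * ‖J t‖)
    (hmono : ∀ t ∈ Set.Icc 0 τ, ‖J t‖ ≤ ‖J τ‖) :
    ‖J τ - τ • J' τ‖ ≤ (1 / 2) * C₀ * τ ^ 2 * ‖J τ‖ ∧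
      τ * ‖J' τ‖ ≤ (1 + (1 / 2) * C₀ * τ ^ 2) * ‖J τ‖ := by
  set U : ℝ → EuclideanSpace ℝ (Fin m) := fun t => J t - t • J' t with hU
  set U' : ℝ → EuclideanSpace ℝ (Fin m) := fun t => -(t • J'' t) with hU'
  have hUderiv : ∀ t ∈ Set.Icc (0:ℝ) τ, HasDerivWithinAt U (U' t) (Set.Icc 0 τ) t := by
    intro t ht
    have h1 : HasDerivWithinAt (fun s : ℝ => s • J' s) (t • J'' t + (1:ℝ) • J' t)
        (Set.Icc 0 τ) t :=
      (hasDerivWithinAt_id t _).smul (hJ'' t ht)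
    have h2 := (hJ' t ht).sub h1
    have heq : J' t - (t • J'' t + (1:ℝ) • J' t) = U' t := by
      simp [U', one_smul]
    exact heq ▸ h2
  have hJcont : ContinuousOn J (Set.Icc 0 τ) := fun t ht => (hJ' t ht).continuousWithinAt
  have hJ'cont : ContinuousOn J' (Set.Icc 0 τ) := fun t ht => (hJ'' t ht).continuousWithinAt
  have hUcont : ContinuousOn U (Set.Icc 0 τ) :=
    hJcont.sub ((continuousOn_id).smul hJ'cont)
  have key : ‖U τ‖ ≤ C₀ * ‖J τ‖ * (τ ^ 2 / 2) := by
    have := image_norm_le_of_norm_deriv_right_le_deriv_boundary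
      (f := U) (f' := U') (a := 0) (b := τ)
      hUcont
      (fun x hx => (hUderiv x (Set.Ico_subset_Icc_self hx)).mono_of_mem_nhdsWithin
        (Icc_mem_nhdsGE_of_mem hx))
      (B := fun t => C₀ * ‖J τ‖ * (t ^ 2 / 2)) (B' := fun t => C₀ * ‖J τ‖ * t)
      (by simp [U, hJ0])
      (fun x => by
        have : HasDerivAt (fun t : ℝ => C₀ * ‖J τ‖ * (t ^ 2 / 2)) (C₀ * ‖J τ‖ * x) x := by
          simpa [mul_comm, mul_assoc, mul_div_assoc] using
            (((hasDerivAt_pow 2 x).div_const 2).const_mul (C₀ * ‖J τ‖))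
        exact this)
      (fun x hx => by
        have hx0 : (0:ℝ) ≤ x := hx.1
        have : ‖U' x‖ = x * ‖J'' x‖ := by
          simp [U', norm_smul, abs_of_nonneg hx0]
        rw [this]
        have h1 : ‖J'' x‖ ≤ C₀ * ‖J x‖ := hbound x (Set.Ico_subset_Icc_self hx)
        have h2 : ‖J x‖ ≤ ‖J τ‖ := hmono x (Set.Ico_subset_Icc_self hx)
        calc x * ‖J'' x‖ ≤ x * (C₀ * ‖J τ‖) := by
              exact mul_le_mul_of_nonneg_left (h1.trans (by nlinarith)) hx0
          _ = C₀ * ‖J τ‖ * x := by ring)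
    exact this (Set.right_mem_Icc.mpr hτ.le)
  have h1 : ‖J τ - τ • J' τ‖ ≤ (1 / 2) * C₀ * τ ^ 2 * ‖J τ‖ := by
    have : ‖U τ‖ = ‖J τ - τ • J' τ‖ := rfl
    rw [← this]; linarith [key, sq_nonneg τ]
  refine ⟨h1, ?_⟩
  have : τ * ‖J' τ‖ = ‖τ • J' τ‖ := by simp [norm_smul, abs_of_nonneg hτ.le]
  rw [this]
  calc ‖τ • J' τ‖ ≤ ‖J τ‖ + ‖J τ - τ • J' τ‖ := by
        have := norm_sub_norm_le (J τ) (J τ - τ • J' τ)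
        have h := norm_le_norm_add_norm_sub' (τ • J' τ) (J τ)
        simpa [norm_sub_rev] using h
    _ ≤ ‖J τ‖ + (1 / 2) * C₀ * τ ^ 2 * ‖J τ‖ := by linarith
    _ = (1 + (1 / 2) * C₀ * τ ^ 2) * ‖J τ‖ := by ring
end
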